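/- arXiv:2008.03362 — 4 statements merged into one kernel-verified Lean document; each statement's English description precedes it below -/
import Mathlib

section
/- Let d, E be natural numbers and let e_0, e_1, ..., e_{3^d-1} enumerate the set {(n_1,...,n_d) ∈ ℤ^d : each n_i ∈ {0, E, -E}} with e_0 = 0. Suppose D, r are natural numbers with D ≤ E ≤ 2D, and T is a collection of centers c_i ∈ ℤ^d such that the cubes c_i + [-D,D]^d are pairwise disjoint and the union Dom(T) of these cubes intersects [-E,E]^d. Then 0 lies in Dom(T) ∪ (Dom(T)+e_1) ∪ ... ∪ (Dom(T)+e_{3^d-1}). -/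
/-- If `D ≤ E ≤ 2D` and `T` is a collection of centers in `ℤ^d` whose
cubes `c + □_D` are pairwise disjoint and whose union `Dom T` meets `□_E`, then `0`
lies in `⋃_e (Dom T + e)` where `e` ranges over vectors with coordinates in `{0, E, -E}`. -/
theorem stmt_0 (d E D r : ℕ) (hDE : D ≤ E) (hE2 : E ≤ 2 * D)
    (T : Set (Fin d → ℤ))
    (hdisj : ∀ c₁ ∈ T, ∀ c₂ ∈ T, c₁ ≠ c₂ →
      ∀ m : Fin d → ℤ, ¬ ((∀ i, |m i - c₁ i| ≤ (D : ℤ)) ∧ (∀ i, |m i - c₂ i| ≤ (D : ℤ))))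
    (hmeet : ∃ m : Fin d → ℤ, (∃ c ∈ T, ∀ i, |m i - c i| ≤ (D : ℤ)) ∧ ∀ i, |m i| ≤ (E : ℤ)) :
    ∃ e : Fin d → ℤ, (∀ i, e i = 0 ∨ e i = (E : ℤ) ∨ e i = -(E : ℤ)) ∧
      ∃ c ∈ T, ∀ i, |(-e i) - c i| ≤ (D : ℤ) := by
  obtain ⟨m, ⟨c, hcT, hmc⟩, hmE⟩ := hmeet
  refine ⟨fun i => if (D : ℤ) < c i then -(E : ℤ) else if c i < -(D : ℤ) then (E : ℤ) else 0,
    fun i => by dsimp only; split_ifs <;> simp, c, hcT, fun i => ?_⟩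
  have h1 := abs_le.mp (hmc i)
  have h2 := abs_le.mp (hmE i)
  have hED : (E : ℤ) ≤ 2 * D := by exact_mod_cast hE2
  dsimp only
  split_ifs with ha hb <;> rw [abs_le] <;> constructor <;> omega
end

section
/- Let X be the Cantor set with a free continuous ℤ^d-action and let N ∈ ℕ. Then there exist natural numbers r, D, E with r > N√d and D ≤ E ≤ 2D, and a continuous equivariant map x ↦ T(x) assigning to each x ∈ X an (r, D, E)-tiling of ℤ^d. -/
/-!
Fix `r` and let `F` be the nonzero lattice points of the cube `[-3r, 3r]^d`. Because the action is free and
`X` is compact and zero-dimensional, `X` has a finite cover by clopen sets disjoint from their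
`F`-translates, and a greedy pass over this cover yields a clopen marker set `A` that is disjoint
from its `F`-translates and is reached from every point by a translation in `F ∪ {0}`. The centres
`T x = {c | x·c ∈ A}` then depend continuously and equivariantly on `x`; two distinct centres
differ by more than `3r` in some coordinate, so the cubes of radius `r` around them are more than
`r` apart, and some centre lies within `3r` of the origin, so its cube meets `□_{2r}`. Taking
`r = N d + 1 > N √d` proves the theorem.
-/

open Filter Topology Set

section Marker

variable {X G : Type*}

def AvoidsTranslates (act : X → G → X) (F : Finset G) (A : Set X) : Prop :=
  ∀ u ∈ A, ∀ n ∈ F, act u n ∉ A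

def greedyMarker (act : X → G → X) (F : Finset G) : List (Set X) → Set X
  | [] => ∅
  | U :: l => greedyMarker act F l ∪ (U ∩ ⋂ n ∈ F, {u | act u n ∉ greedyMarker act F l})

theorem isClopen_greedyMarker [TopologicalSpace X] {act : X → G → X} (hactc : ∀ n, Continuous fun x => act x n)
    (F : Finset G) {l : List (Set X)} (hl : ∀ U ∈ l, IsClopen U) :
    IsClopen (greedyMarker act F l) := by
  induction l with
  | nil => exact isClopen_empty
  | cons U l ih =>
    have hB := ih fun V hV => hl V (List.mem_cons_of_mem _ hV)
    exact hB.union ((hl U List.mem_cons_self).inter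
      (isClopen_biInter_finset fun n _ => hB.compl.preimage (hactc n)))

theorem avoidsTranslates_greedyMarker [AddGroup G] {act : X → G → X} (hact0 : ∀ x, act x 0 = x)
    (hactadd : ∀ x m n, act (act x m) n = act x (m + n)) {F : Finset G}
    (hFneg : ∀ n ∈ F, -n ∈ F) {l : List (Set X)} (hl : ∀ U ∈ l, AvoidsTranslates act F U) :
    AvoidsTranslates act F (greedyMarker act F l) := by
  induction l with
  | nil => exact fun u hu => absurd hu (notMem_empty u)
  | cons U l ih =>
    have hB := ih fun V hV => hl V (List.mem_cons_of_mem _ hV)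
    rintro u (hu | ⟨huU, hu⟩) n hn (hun | ⟨hunU, hun⟩)
    · exact hB u hu n hn hun
    · refine mem_iInter₂.1 hun (-n) (hFneg n hn) ?_
      rwa [hactadd, add_neg_cancel, hact0]
    · exact mem_iInter₂.1 hu n hn hun
    · exact hl U List.mem_cons_self u huU n hn hunU

theorem exists_act_mem_greedyMarker [Zero G] {act : X → G → X} (hact0 : ∀ x, act x 0 = x)
    (F : Finset G) {l : List (Set X)} :
    ∀ U ∈ l, ∀ u ∈ U, ∃ n, (n = 0 ∨ n ∈ F) ∧ act u n ∈ greedyMarker act F l := by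
  induction l with
  | nil => exact fun U hU => absurd hU List.not_mem_nil
  | cons V l ih =>
    intro U hU u hu
    rcases List.mem_cons.1 hU with rfl | hU
    · by_cases h : ∃ n ∈ F, act u n ∈ greedyMarker act F l
      · obtain ⟨n, hn, hmem⟩ := h
        exact ⟨n, Or.inr hn, Or.inl hmem⟩
      · push Not at h
        refine ⟨0, Or.inl rfl, Or.inr ?_⟩
        rw [hact0]
        exact ⟨hu, mem_iInter₂.2 h⟩
    · obtain ⟨n, hn, hmem⟩ := ih U hU u hu
      exact ⟨n, hn, Or.inl hmem⟩

theorem exists_isClopen_mem_avoidsTranslates [TopologicalSpace X] [TotallySeparatedSpace X]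
    [Zero G] {act : X → G → X}
    (hactc : ∀ n, Continuous fun x => act x n) (hfree : ∀ x n, act x n = x → n = 0)
    {F : Finset G} (hF0 : 0 ∉ F) (x : X) :
    ∃ U : Set X, IsClopen U ∧ x ∈ U ∧ AvoidsTranslates act F U := by
  have hsep : ∀ n, ∃ C : Set X, IsClopen C ∧ x ∈ C ∧ (n ∈ F → act x n ∉ C) := by
    intro n
    by_cases hn : n ∈ F
    · have hne : x ≠ act x n := fun h => hF0 (hfree x n h.symm ▸ hn)
      obtain ⟨C, hC, hxC, hnC⟩ := exists_isClopen_of_totally_separated hne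
      exact ⟨C, hC, hxC, fun _ => hnC⟩
    · exact ⟨univ, isClopen_univ, mem_univ x, fun h => absurd h hn⟩
  choose C hC hxC hnC using hsep
  refine ⟨⋂ n ∈ F, C n ∩ (fun u => act u n) ⁻¹' (C n)ᶜ,
    isClopen_biInter_finset fun n _ => (hC n).inter ((hC n).compl.preimage (hactc n)),
    mem_iInter₂.2 fun n hn => ⟨hxC n, hnC n hn⟩, fun u hu n hn hun => ?_⟩
  exact (mem_iInter₂.1 hu n hn).2 (mem_iInter₂.1 hun n hn).1

theorem exists_isClopen_marker [TopologicalSpace X] [CompactSpace X] [TotallySeparatedSpace X] [AddGroup G]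
    {act : X → G → X} (hact0 : ∀ x, act x 0 = x) (hactadd : ∀ x m n, act (act x m) n = act x (m + n))
    (hactc : ∀ n, Continuous fun x => act x n) (hfree : ∀ x n, act x n = x → n = 0)
    {F : Finset G} (hF0 : 0 ∉ F) (hFneg : ∀ n ∈ F, -n ∈ F) :
    ∃ A : Set X, IsClopen A ∧ AvoidsTranslates act F A ∧ ∀ x, ∃ n, (n = 0 ∨ n ∈ F) ∧ act x n ∈ A := by
  choose U hU hxU hUF using exists_isClopen_mem_avoidsTranslates hactc hfree hF0
  obtain ⟨s, hs⟩ := isCompact_univ.elim_finite_subcover U (fun x => (hU x).isOpen)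
    fun x _ => mem_iUnion.2 ⟨x, hxU x⟩
  have hmem : ∀ V ∈ s.toList.map U, ∃ y, U y = V := fun V hV => by
    obtain ⟨y, -, hy⟩ := List.mem_map.1 hV
    exact ⟨y, hy⟩
  refine ⟨greedyMarker act F (s.toList.map U),
    isClopen_greedyMarker hactc F fun V hV => ?_,
    avoidsTranslates_greedyMarker hact0 hactadd hFneg fun V hV => ?_, fun x => ?_⟩
  · obtain ⟨y, rfl⟩ := hmem V hV
    exact hU y
  · obtain ⟨y, rfl⟩ := hmem V hV
    exact hUF y
  · obtain ⟨y, hy, hxy⟩ := mem_iUnion₂.1 (hs (mem_univ x))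
    exact exists_act_mem_greedyMarker hact0 F (U y)
      (List.mem_map.2 ⟨y, Finset.mem_toList.2 hy, rfl⟩) x hxy

theorem eventually_forall_act_mem_iff [TopologicalSpace X] {act : X → G → X}
    (hactc : ∀ n, Continuous fun x => act x n) {A : Set X} (hA : IsClopen A) {S : Set G}
    (hS : S.Finite) (x : X) : ∀ᶠ y in 𝓝 x, ∀ n ∈ S, act y n ∈ A ↔ act x n ∈ A := by
  refine hS.eventually_all.2 fun n _ =>
    ((hactc n).continuousAt (x := x)).eventually (p := (· ∈ A ↔ act x n ∈ A)) ?_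
  by_cases hx : act x n ∈ A
  · filter_upwards [hA.isOpen.mem_nhds hx] with y hy using iff_of_true hy hx
  · filter_upwards [hA.compl.isOpen.mem_nhds hx] with y hy using iff_of_false hy hx

theorem sub_notMem_of_act_mem [AddCommGroup G] {act : X → G → X}
    (hactadd : ∀ x m n, act (act x m) n = act x (m + n)) {F : Finset G} {A : Set X}
    (hA : AvoidsTranslates act F A) {x : X} {c₁ c₂ : G} (h₁ : act x c₁ ∈ A)
    (h₂ : act x c₂ ∈ A) : c₂ - c₁ ∉ F :=
  fun hF => hA _ h₁ _ hF (by rwa [hactadd, add_sub_cancel])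

end Marker

section Lattice

variable {ι : Type*} [Fintype ι]

noncomputable def puncturedCube [DecidableEq ι] (K : ℤ) : Finset (ι → ℤ) :=
  Fintype.piFinset (fun _ => Finset.Icc (-K) K) \ {0}

theorem mem_puncturedCube [DecidableEq ι] {K : ℤ} {n : ι → ℤ} :
    n ∈ puncturedCube K ↔ (∀ i, |n i| ≤ K) ∧ n ≠ 0 := by
  simp [puncturedCube, abs_le]

theorem neg_mem_puncturedCube [DecidableEq ι] {K : ℤ} {n : ι → ℤ} (hn : n ∈ puncturedCube K) :
    -n ∈ puncturedCube K := by
  simpa [mem_puncturedCube] using hn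

theorem exists_lt_abs_sub_of_sub_notMem_puncturedCube [DecidableEq ι] {K : ℤ} {c₁ c₂ : ι → ℤ}
    (hne : c₁ ≠ c₂) (h : c₂ - c₁ ∉ puncturedCube K) : ∃ i, K < |c₁ i - c₂ i| := by
  by_contra! hcon
  refine h (mem_puncturedCube.2 ⟨fun i => ?_, sub_ne_zero.2 hne.symm⟩)
  simpa [abs_sub_comm] using hcon i

theorem abs_le_sqrt_sum_sq (v : ι → ℝ) (i : ι) : |v i| ≤ √(∑ j, v j ^ 2) :=
  Real.abs_le_sqrt (Finset.single_le_sum (fun j _ => sq_nonneg (v j)) (Finset.mem_univ i))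

theorem finite_setOf_sqrt_sum_sq_le (R : ℝ) :
    {n : ι → ℤ | √(∑ i, (n i : ℝ) ^ 2) ≤ R}.Finite := by
  classical
  refine (Set.finite_Icc (fun _ => -⌈R⌉) (fun _ => ⌈R⌉)).subset fun n hn => ?_
  have h : ∀ i, |n i| ≤ ⌈R⌉ := fun i => by
    have := ((abs_le_sqrt_sum_sq (fun j => (n j : ℝ)) i).trans hn).trans (Int.le_ceil R)
    exact_mod_cast this
  exact ⟨fun i => (abs_le.1 (h i)).1, fun i => (abs_le.1 (h i)).2⟩

end Lattice

theorem lt_abs_sub_of_three_mul_lt_abs_sub {a b c₁ c₂ D : ℤ} (hc : 3 * D < |c₁ - c₂|)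
    (ha : |a - c₁| ≤ D) (hb : |b - c₂| ≤ D) : D < |a - b| := by
  rw [abs_le] at ha hb
  rw [lt_abs] at hc ⊢
  omega

theorem exists_abs_sub_le_of_abs_le_three_mul {z D : ℤ} (hz : |z| ≤ 3 * D) :
    ∃ m, |m - z| ≤ D ∧ |m| ≤ 2 * D :=
  ⟨max (-(2 * D)) (min z (2 * D)), by simp only [abs_le] at hz ⊢; omega⟩

theorem mul_sqrt_lt_mul_add_one (N d : ℕ) : (N : ℝ) * √d < (N * d + 1 : ℕ) := by
  have hd : √(d : ℝ) ≤ d := Real.sqrt_le_self_iff.2 <| by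
    rcases Nat.eq_zero_or_pos d with rfl | hd
    · exact Or.inl Nat.cast_zero
    · exact Or.inr (by exact_mod_cast hd)
  push_cast
  nlinarith [mul_le_mul_of_nonneg_left hd (Nat.cast_nonneg (α := ℝ) N)]

theorem exists_lt_abs_sub_of_avoidsTranslates {X ι : Type*} [Fintype ι] [DecidableEq ι]
    {act : X → (ι → ℤ) → X} (hactadd : ∀ x m n, act (act x m) n = act x (m + n)) {D : ℤ}
    {A : Set X} (hA : AvoidsTranslates act (puncturedCube (3 * D)) A) {x : X} {c₁ c₂ : ι → ℤ}
    (h₁ : act x c₁ ∈ A) (h₂ : act x c₂ ∈ A) (hne : c₁ ≠ c₂) {m₁ m₂ : ι → ℤ}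
    (hm₁ : ∀ i, |m₁ i - c₁ i| ≤ D) (hm₂ : ∀ i, |m₂ i - c₂ i| ≤ D) : ∃ i, D < |m₁ i - m₂ i| := by
  obtain ⟨i, hi⟩ := exists_lt_abs_sub_of_sub_notMem_puncturedCube hne
    (sub_notMem_of_act_mem hactadd hA h₁ h₂)
  exact ⟨i, lt_abs_sub_of_three_mul_lt_abs_sub hi (hm₁ i) (hm₂ i)⟩

/-- for a free continuous `ℤ^d`-action on the Cantor set `X` and any
`N ∈ ℕ`, there exist `r, D, E ∈ ℕ` with `r > N√d` and `D ≤ E ≤ 2D`, and a continuous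
equivariant map `x ↦ T x` assigning to each `x` an `(r, D, E)`-tiling of `ℤ^d`. -/
theorem stmt_12 (d N : ℕ) (X : Type*) [TopologicalSpace X]
    (hCantor : Nonempty (X ≃ₜ (ℕ → Bool)))
    (act : X → (Fin d → ℤ) → X)
    (hact0 : ∀ x, act x 0 = x)
    (hactadd : ∀ x m n, act (act x m) n = act x (m + n))
    (hactc : ∀ n, Continuous fun x => act x n)
    (hfree : ∀ x n, act x n = x → n = 0) :
    ∃ r D E : ℕ, (N : ℝ) * Real.sqrt d < (r : ℝ) ∧ D ≤ E ∧ E ≤ 2 * D ∧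
      ∃ T : X → Set (Fin d → ℤ),
        -- continuity: locally constant on every finite ball
        (∀ x : X, ∀ R : ℝ, 0 < R → ∃ U : Set X, IsOpen U ∧ x ∈ U ∧ ∀ y ∈ U,
          T y ∩ {n | Real.sqrt (∑ i, ((n i : ℝ)) ^ 2) ≤ R} =
          T x ∩ {n | Real.sqrt (∑ i, ((n i : ℝ)) ^ 2) ≤ R}) ∧
        -- equivariance: T (x·n) = T x − n
        (∀ x n, T (act x n) = {c | c + n ∈ T x}) ∧
        -- each T x is an (r, D, E)-tiling:
        (∀ x : X,
          -- cubes pairwise disjoint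
          (∀ c₁ ∈ T x, ∀ c₂ ∈ T x, c₁ ≠ c₂ →
            ∀ m : Fin d → ℤ, ¬ ((∀ i, |m i - c₁ i| ≤ (D : ℤ)) ∧ (∀ i, |m i - c₂ i| ≤ (D : ℤ)))) ∧
          -- distinct cubes at Euclidean distance at least r
          (∀ c₁ ∈ T x, ∀ c₂ ∈ T x, c₁ ≠ c₂ →
            ∀ m₁ m₂ : Fin d → ℤ, (∀ i, |m₁ i - c₁ i| ≤ (D : ℤ)) →
              (∀ i, |m₂ i - c₂ i| ≤ (D : ℤ)) →
              (r : ℝ) ≤ Real.sqrt (∑ i, ((m₁ i - m₂ i : ℤ) : ℝ) ^ 2)) ∧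
          -- Dom (T x) meets □_E
          (∃ m : Fin d → ℤ, (∃ c ∈ T x, ∀ i, |m i - c i| ≤ (D : ℤ)) ∧ ∀ i, |m i| ≤ (E : ℤ))) := by
  obtain ⟨e⟩ := hCantor
  have : CompactSpace X := e.symm.compactSpace
  have : T2Space X := e.symm.t2Space
  have : TotallyDisconnectedSpace X := e.symm.totallyDisconnectedSpace
  set r := N * d + 1
  obtain ⟨A, hA, hAF, hAcov⟩ := exists_isClopen_marker hact0 hactadd hactc hfree
    (F := puncturedCube (3 * r : ℤ)) (by simp [mem_puncturedCube]) fun n => neg_mem_puncturedCube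
  refine ⟨r, r, 2 * r, mul_sqrt_lt_mul_add_one N d, by omega, le_rfl, fun x => {c | act x c ∈ A},
    fun x R _ => ?_, fun x n => ?_, fun x => ⟨?_, ?_, ?_⟩⟩
  · obtain ⟨U, hU, hUo, hxU⟩ := eventually_nhds_iff.1
      (eventually_forall_act_mem_iff hactc hA (finite_setOf_sqrt_sum_sq_le R) x)
    exact ⟨U, hUo, hxU, fun y hy => ext fun n => and_congr_left fun hn => hU y hy n hn⟩
  · ext c
    change act (act x n) c ∈ A ↔ act x (c + n) ∈ A
    rw [hactadd, add_comm]
  · rintro c₁ h₁ c₂ h₂ hne m ⟨hm₁, hm₂⟩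
    obtain ⟨i, hi⟩ := exists_lt_abs_sub_of_avoidsTranslates hactadd hAF h₁ h₂ hne hm₁ hm₂
    rw [sub_self, abs_zero] at hi
    omega
  · intro c₁ h₁ c₂ h₂ hne m₁ m₂ hm₁ hm₂
    obtain ⟨i, hi⟩ := exists_lt_abs_sub_of_avoidsTranslates hactadd hAF h₁ h₂ hne hm₁ hm₂
    calc (r : ℝ) ≤ |((m₁ i - m₂ i : ℤ) : ℝ)| := by exact_mod_cast hi.le
      _ ≤ _ := abs_le_sqrt_sum_sq (fun j => ((m₁ j - m₂ j : ℤ) : ℝ)) i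
  · obtain ⟨n, hn, hnA⟩ := hAcov x
    have hnK : ∀ i, |n i| ≤ 3 * r := by
      rcases hn with rfl | hn
      · simp
      · exact (mem_puncturedCube.1 hn).1
    choose m hm using fun i => exists_abs_sub_le_of_abs_le_three_mul (hnK i)
    exact ⟨m, ⟨n, hnA, fun i => (hm i).1⟩, fun i => by exact_mod_cast (hm i).2⟩
end

section
/- Any free continuous ℤ^d-action on the Cantor set has dynamical asymptotic dimension at most 3^d − 1. -/
/-!
Freeness and total disconnectedness give every point a clopen neighbourhood `V` with
`V ∩ V·n = ∅` for `0 ≠ n ∈ K`; a greedy pass over a finite cover by such sets yields a clopen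
marker set `A` with the same separation property and `A·K = X`. Take `K` to be the cube of
radius `3r + 1` in `ℤ^d`, where `F` lies in the cube of radius `r`. It is the union of `3^d`
cubes `B_η` of radius `r`, so the towers `A·B_η` cover `X`. An `F`-step from `a·u` (`a ∈ A`,
`u ∈ B_η`) that lands in `A·B_η`, say at `a'·v`, has `a' = a·(u + γ - v)` with
`u + γ - v ∈ K`, so `a' = a` by separation: `F`-paths inside `A·B_η` stay in `a·B_η`, which has
at most `(2r + 1)^d` points.
-/

/-- The reachable set of `x` by `F`-paths staying in `U` (additive group version). -/
def reachSet {Γ X : Type*} [AddGroup Γ] (act : X → Γ → X) (F : Finset Γ) (U : Set X)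
    (x : X) : Set X :=
  {y | ∃ l : List Γ, l ≠ [] ∧ (∀ γ ∈ l, γ ∈ F) ∧ y = act x l.sum ∧
    ∀ k, 1 ≤ k → k ≤ l.length → act x (l.take k).sum ∈ U}

/-- The dynamical asymptotic dimension of `act` is at most `m`. -/
def DADle {Γ X : Type*} [AddGroup Γ] [TopologicalSpace X] (act : X → Γ → X) (m : ℕ) : Prop :=
  ∀ F : Finset Γ, ∃ U : Fin (m + 1) → Set X, (∀ i, IsOpen (U i)) ∧ (⋃ i, U i) = Set.univ ∧
    ∃ M : ℕ, ∀ i, ∀ x ∈ U i,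
      (reachSet act F (U i) x).Finite ∧ (reachSet act F (U i) x).ncard ≤ M

/-- The dynamical asymptotic dimension of an action, as an extended natural number. -/
noncomputable def DAD {Γ X : Type*} [AddGroup Γ] [TopologicalSpace X] (act : X → Γ → X) : ℕ∞ :=
  sInf {m : ℕ∞ | ∃ k : ℕ, m = (k : ℕ∞) ∧ DADle act k}

open Set

theorem Homeomorph.totallySeparatedSpace {X Y : Type*} [TopologicalSpace X] [TopologicalSpace Y]
    [TotallySeparatedSpace Y] (e : X ≃ₜ Y) : TotallySeparatedSpace X :=
  totallySeparatedSpace_iff_exists_isClopen.mpr fun _ _ hxy => by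
    obtain ⟨U, hU, hxU, hyU⟩ := exists_isClopen_of_totally_separated (e.injective.ne hxy)
    exact ⟨e ⁻¹' U, hU.preimage e.continuous, hxU, hyU⟩

section RightAction

variable {Γ X : Type*} [AddGroup Γ]

structure IsAddRightAction (act : X → Γ → X) : Prop where
  act_zero : ∀ x, act x 0 = x
  act_act : ∀ x m n, act (act x m) n = act x (m + n)

/-- The tower `A·B = ⋃_{u ∈ B} A·u`, using that `x ∈ A·u` iff `x·(-u) ∈ A`. -/
def tower (act : X → Γ → X) (A : Set X) (B : Finset Γ) : Set X :=
  ⋃ u ∈ B, (fun x => act x (-u)) ⁻¹' A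

def IsSeparated (act : X → Γ → X) (K : Finset Γ) (A : Set X) : Prop :=
  ∀ a ∈ A, ∀ n ∈ K, act a n ∈ A → n = 0

variable {act : X → Γ → X} {A V : Set X} {B K : Finset Γ}

theorem IsAddRightAction.act_act_neg (hact : IsAddRightAction act) (x : X) (n : Γ) :
    act (act x n) (-n) = x := by
  rw [hact.act_act, add_neg_cancel, hact.act_zero]

theorem IsAddRightAction.act_neg_act (hact : IsAddRightAction act) (x : X) (n : Γ) :
    act (act x (-n)) n = x := by
  rw [hact.act_act, neg_add_cancel, hact.act_zero]

theorem mem_tower {x : X} : x ∈ tower act A B ↔ ∃ u ∈ B, act x (-u) ∈ A := by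
  simp [tower]

theorem tower_mono {A' : Set X} (hA : A ⊆ A') : tower act A B ⊆ tower act A' B :=
  biUnion_mono subset_rfl fun _ _ => preimage_mono hA

theorem IsAddRightAction.subset_tower (hact : IsAddRightAction act) (h0 : 0 ∈ B) :
    A ⊆ tower act A B :=
  fun x hx => mem_tower.mpr ⟨0, h0, by rwa [neg_zero, hact.act_zero]⟩

theorem isOpen_tower [TopologicalSpace X] (hcont : ∀ n, Continuous fun x => act x n)
    (hA : IsOpen A) : IsOpen (tower act A B) :=
  isOpen_biUnion fun u _ => hA.preimage (hcont (-u))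

theorem isClopen_tower [TopologicalSpace X] (hcont : ∀ n, Continuous fun x => act x n)
    (hA : IsClopen A) : IsClopen (tower act A B) :=
  isClopen_biUnion_finset fun u _ => hA.preimage (hcont (-u))

theorem IsSeparated.union_diff_tower (hact : IsAddRightAction act) (hK : ∀ n ∈ K, -n ∈ K)
    (hA : IsSeparated act K A) (hV : IsSeparated act K V) :
    IsSeparated act K (A ∪ (V \ tower act A K)) := by
  rintro a (ha | ⟨haV, haA⟩) n hn (hb | ⟨hbV, hbA⟩)
  · exact hA a ha n hn hb
  · exact (hbA (mem_tower.mpr ⟨n, hn, by rwa [hact.act_act_neg]⟩)).elim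
  · exact (haA (mem_tower.mpr ⟨-n, hK n hn, by rwa [neg_neg]⟩)).elim
  · exact hV a haV n hn hbV

section Topology

variable [TopologicalSpace X]

theorem exists_isClopen_isSeparated_subset_tower {ι : Type*} (hact : IsAddRightAction act)
    (hcont : ∀ n, Continuous fun x => act x n) (hK0 : 0 ∈ K) (hK : ∀ n ∈ K, -n ∈ K)
    {V : ι → Set X} (hV : ∀ i, IsClopen (V i) ∧ IsSeparated act K (V i)) (s : Finset ι) :
    ∃ A, IsClopen A ∧ IsSeparated act K A ∧ ⋃ i ∈ s, V i ⊆ tower act A K := by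
  classical
  induction s using Finset.induction_on with
  | empty => exact ⟨∅, isClopen_empty, fun a ha => ha.elim, by simp⟩
  | insert i s _ ih =>
    obtain ⟨A, hAc, hAs, hsA⟩ := ih
    have hAA' : tower act A K ⊆ tower act (A ∪ (V i \ tower act A K)) K :=
      tower_mono subset_union_left
    refine ⟨_, hAc.union ((hV i).1.diff (isClopen_tower hcont hAc)),
      hAs.union_diff_tower hact hK (hV i).2, ?_⟩
    rw [Finset.set_biUnion_insert]
    refine union_subset (fun x hx => ?_) (hsA.trans hAA')
    by_cases hxA : x ∈ tower act A K
    · exact hAA' hxA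
    · exact hact.subset_tower hK0 (Or.inr ⟨hx, hxA⟩)

theorem exists_isClopen_isSeparated_mem [TotallySeparatedSpace X]
    (hcont : ∀ n, Continuous fun x => act x n) (hfree : ∀ x n, act x n = x → n = 0)
    (K : Finset Γ) (x : X) : ∃ V, IsClopen V ∧ x ∈ V ∧ IsSeparated act K V := by
  have hC : ∀ n : Γ, ∃ C : Set X, IsClopen C ∧ x ∈ C ∧ (n ≠ 0 → ∀ v ∈ C, act v n ∉ C) := by
    intro n
    by_cases hn : n = 0
    · exact ⟨univ, isClopen_univ, mem_univ x, fun h => absurd hn h⟩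
    obtain ⟨P, hP, hxP, hnP⟩ :=
      exists_isClopen_of_totally_separated fun h => hn (hfree x n h.symm)
    exact ⟨P ∩ (fun v => act v n) ⁻¹' Pᶜ, hP.inter (hP.compl.preimage (hcont n)), ⟨hxP, hnP⟩,
      fun _ _ hv hvn => hv.2 hvn.1⟩
  choose C hCc hxC hCsep using hC
  refine ⟨⋂ n ∈ K, C n, isClopen_biInter_finset fun n _ => hCc n,
    mem_iInter₂.mpr fun n _ => hxC n, fun v hv n hn hvn => ?_⟩
  by_contra h0
  exact hCsep n h0 v (mem_iInter₂.mp hv n hn) (mem_iInter₂.mp hvn n hn)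

theorem exists_isClopen_isSeparated_tower_eq_univ [CompactSpace X] [TotallySeparatedSpace X]
    (hact : IsAddRightAction act) (hcont : ∀ n, Continuous fun x => act x n)
    (hfree : ∀ x n, act x n = x → n = 0) (hK0 : 0 ∈ K) (hK : ∀ n ∈ K, -n ∈ K) :
    ∃ A, IsClopen A ∧ IsSeparated act K A ∧ tower act A K = univ := by
  choose V hVc hxV hVs using exists_isClopen_isSeparated_mem hcont hfree K
  obtain ⟨t, ht⟩ := isCompact_univ.elim_finite_subcover V (fun x => (hVc x).isOpen)
    fun x _ => mem_iUnion.mpr ⟨x, hxV x⟩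
  obtain ⟨A, hAc, hAs, htA⟩ :=
    exists_isClopen_isSeparated_subset_tower hact hcont hK0 hK (fun x => ⟨hVc x, hVs x⟩) t
  exact ⟨A, hAc, hAs, eq_univ_of_univ_subset (ht.trans htA)⟩

end Topology

theorem IsAddRightAction.reachSet_subset (hact : IsAddRightAction act) {F : Finset Γ}
    {U W : Set X} {x : X} (hx : x ∈ W)
    (hW : ∀ z ∈ W, ∀ γ ∈ F, act z γ ∈ U → act z γ ∈ W) : reachSet act F U x ⊆ W := by
  rintro y ⟨l, -, hlF, rfl, hpath⟩
  have hprefix : ∀ k ≤ l.length, act x (l.take k).sum ∈ W := by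
    intro k hk
    induction k with
    | zero => simpa [hact.act_zero] using hx
    | succ k ih =>
      have hk' : k < l.length := hk
      have hU := hpath (k + 1) (by omega) hk
      rw [List.sum_take_succ _ _ hk', ← hact.act_act] at hU ⊢
      exact hW _ (ih hk'.le) _ (hlF _ (l.getElem_mem hk')) hU
  simpa using hprefix l.length le_rfl

theorem IsSeparated.reachSet_tower_subset (hact : IsAddRightAction act) {F : Finset Γ}
    (hA : IsSeparated act K A) (hB : ∀ u ∈ B, ∀ γ ∈ F, ∀ v ∈ B, u + γ - v ∈ K)
    {a : X} (ha : a ∈ A) {u : Γ} (hu : u ∈ B) :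
    reachSet act F (tower act A B) (act a u) ⊆ act a '' B := by
  refine hact.reachSet_subset ⟨u, hu, rfl⟩ ?_
  rintro _ ⟨u, hu, rfl⟩ γ hγ hmem
  obtain ⟨v, hv, hvA⟩ := mem_tower.mp hmem
  rw [hact.act_act, hact.act_act, ← add_assoc, ← sub_eq_add_neg] at hvA
  have hv' : u + γ = v := sub_eq_zero.mp (hA a ha _ (hB u hu γ hγ v hv) hvA)
  exact ⟨v, hv, by rw [hact.act_act, hv']⟩

theorem IsSeparated.reachSet_tower_finite_ncard_le (hact : IsAddRightAction act)
    {F : Finset Γ} (hA : IsSeparated act K A) (hB : ∀ u ∈ B, ∀ γ ∈ F, ∀ v ∈ B, u + γ - v ∈ K)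
    {x : X} (hx : x ∈ tower act A B) :
    (reachSet act F (tower act A B) x).Finite ∧
      (reachSet act F (tower act A B) x).ncard ≤ B.card := by
  obtain ⟨u, hu, hxu⟩ := mem_tower.mp hx
  have hsub := hA.reachSet_tower_subset hact hB hxu hu
  rw [hact.act_neg_act] at hsub
  have himg : (act (act x (-u)) '' (B : Set Γ)).Finite := B.finite_toSet.image _
  exact ⟨himg.subset hsub, (ncard_le_ncard hsub himg).trans
    ((ncard_image_le B.finite_toSet).trans (ncard_coe_finset B).le)⟩

theorem DADle.of_forall_exists_tiling [TopologicalSpace X] [CompactSpace X]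
    [TotallySeparatedSpace X] {ι : Type*} [Fintype ι] {m : ℕ} (hι : Fintype.card ι = m + 1)
    (hact : IsAddRightAction act) (hcont : ∀ n, Continuous fun x => act x n)
    (hfree : ∀ x n, act x n = x → n = 0)
    (htile : ∀ F : Finset Γ, ∃ K : Finset Γ, 0 ∈ K ∧ (∀ n ∈ K, -n ∈ K) ∧ ∃ B : ι → Finset Γ,
      (∀ n ∈ K, ∃ i, n ∈ B i) ∧ ∀ i, ∀ u ∈ B i, ∀ γ ∈ F, ∀ v ∈ B i, u + γ - v ∈ K) :
    DADle act m := by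
  intro F
  obtain ⟨K, hK0, hK, B, hKB, hB⟩ := htile F
  obtain ⟨A, hAc, hAs, hAK⟩ := exists_isClopen_isSeparated_tower_eq_univ hact hcont hfree hK0 hK
  let e := Fintype.equivFinOfCardEq hι
  refine ⟨fun i => tower act A (B (e.symm i)), fun i => isOpen_tower hcont hAc.isOpen, ?_,
    Finset.univ.sup fun i => (B i).card, fun i x hx => ?_⟩
  · refine eq_univ_of_forall fun x => ?_
    obtain ⟨u, hu, hxu⟩ := mem_tower.mp (hAK ▸ mem_univ x)
    obtain ⟨i, hi⟩ := hKB u hu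
    exact mem_iUnion.mpr ⟨e i, by rw [e.symm_apply_apply]; exact mem_tower.mpr ⟨u, hi, hxu⟩⟩
  · obtain ⟨hfin, hcard⟩ := hAs.reachSet_tower_finite_ncard_le hact (hB _) hx
    exact ⟨hfin, hcard.trans (Finset.le_sup (f := fun i => (B i).card) (Finset.mem_univ _))⟩

end RightAction

section Cube

variable {d : ℕ}

noncomputable def cube (c : Fin d → ℤ) (r : ℕ) : Finset (Fin d → ℤ) :=
  Fintype.piFinset fun j => Finset.Icc (c j - r) (c j + r)

theorem mem_cube {c n : Fin d → ℤ} {r : ℕ} :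
    n ∈ cube c r ↔ ∀ j, c j - r ≤ n j ∧ n j ≤ c j + r := by
  simp [cube]

theorem card_cube (c : Fin d → ℤ) (r : ℕ) : (cube c r).card = (2 * r + 1) ^ d := by
  have hside : ∀ j, (Finset.Icc (c j - r) (c j + r)).card = 2 * r + 1 := fun j => by
    rw [Int.card_Icc]; omega
  simp [cube, hside]

theorem zero_mem_cube (r : ℕ) : (0 : Fin d → ℤ) ∈ cube 0 r :=
  mem_cube.mpr fun _ => by simp

theorem neg_mem_cube {n : Fin d → ℤ} {r : ℕ} (hn : n ∈ cube 0 r) : -n ∈ cube 0 r :=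
  mem_cube.mpr fun j => by
    have := mem_cube.mp hn j
    simp only [Pi.zero_apply, Pi.neg_apply] at *
    omega

theorem cube_mono (c : Fin d → ℤ) {r s : ℕ} (h : r ≤ s) : cube c r ⊆ cube c s :=
  fun n hn => mem_cube.mpr fun j => by have := mem_cube.mp hn j; omega

theorem add_sub_mem_cube {c u v γ : Fin d → ℤ} {r s : ℕ} (hu : u ∈ cube c r) (hv : v ∈ cube c r)
    (hγ : γ ∈ cube 0 s) : u + γ - v ∈ cube 0 (2 * r + s) :=
  mem_cube.mpr fun j => by
    have := mem_cube.mp hu j; have := mem_cube.mp hv j; have := mem_cube.mp hγ j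
    simp only [Pi.zero_apply, Pi.add_apply, Pi.sub_apply] at *
    omega

theorem exists_subset_cube (F : Finset (Fin d → ℤ)) : ∃ r : ℕ, F ⊆ cube 0 r := by
  refine ⟨∑ γ ∈ F, ∑ j, (γ j).natAbs, fun γ hγ => mem_cube.mpr fun j => ?_⟩
  have hle : (γ j).natAbs ≤ ∑ γ ∈ F, ∑ j, (γ j).natAbs :=
    (Finset.single_le_sum (f := fun j => (γ j).natAbs) (by simp) (Finset.mem_univ j)).trans
      (Finset.single_le_sum (f := fun γ => ∑ j, (γ j).natAbs) (by simp) hγ)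
  simp only [Pi.zero_apply, zero_sub]
  omega

/-- The centres of the `3^d` cubes of radius `r` that tile the cube of radius `3r + 1`. -/
def cubeCenter (r : ℕ) (η : Fin d → Fin 3) : Fin d → ℤ :=
  fun j => (2 * r + 1) * ((η j : ℤ) - 1)

theorem exists_mem_cube_cubeCenter {r : ℕ} {n : Fin d → ℤ} (hn : n ∈ cube 0 (3 * r + 1)) :
    ∃ η : Fin d → Fin 3, n ∈ cube (cubeCenter r η) r := by
  have hcoord : ∀ j, ∃ c : Fin 3, (2 * r + 1) * ((c : ℤ) - 1) - r ≤ n j ∧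
      n j ≤ (2 * r + 1) * ((c : ℤ) - 1) + r := by
    intro j
    have := mem_cube.mp hn j
    simp only [Pi.zero_apply] at this
    push_cast at this
    rcases lt_or_ge (n j) (-r) with h | h
    · exact ⟨0, by simp only [Fin.val_zero]; push_cast; omega⟩
    rcases le_or_gt (n j) r with h' | h'
    · exact ⟨1, by simp only [Fin.val_one]; push_cast; omega⟩
    · exact ⟨2, by simp only [Fin.val_two]; push_cast; omega⟩
  choose η hη using hcoord
  exact ⟨η, mem_cube.mpr hη⟩

end Cube

theorem DADle.three_pow_sub_one {d : ℕ} {X : Type*} [TopologicalSpace X] [CompactSpace X]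
    [TotallySeparatedSpace X] {act : X → (Fin d → ℤ) → X} (hact : IsAddRightAction act)
    (hcont : ∀ n, Continuous fun x => act x n) (hfree : ∀ x n, act x n = x → n = 0) :
    DADle act (3 ^ d - 1) := by
  have hcard : Fintype.card (Fin d → Fin 3) = 3 ^ d - 1 + 1 := by
    have := Nat.one_le_pow d 3 (by norm_num)
    simp only [Fintype.card_fun, Fintype.card_fin]
    omega
  refine DADle.of_forall_exists_tiling hcard hact hcont hfree fun F => ?_
  obtain ⟨r, hF⟩ := exists_subset_cube F
  exact ⟨cube 0 (3 * r + 1), zero_mem_cube _, fun _ => neg_mem_cube,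
    fun η => cube (cubeCenter r η) r, fun _ => exists_mem_cube_cubeCenter,
    fun _ _ hu _ hγ _ hv => cube_mono 0 (by omega) (add_sub_mem_cube hu hv (hF hγ))⟩

/-- any free continuous `ℤ^d`-action on the Cantor set has dynamical
asymptotic dimension at most `3^d − 1`. -/
theorem stmt_14 (d : ℕ) (X : Type*) [TopologicalSpace X]
    (hCantor : Nonempty (X ≃ₜ (ℕ → Bool)))
    (act : X → (Fin d → ℤ) → X)
    (hact0 : ∀ x, act x 0 = x)
    (hactadd : ∀ x m n, act (act x m) n = act x (m + n))
    (hactc : ∀ n, Continuous fun x => act x n)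
    (hfree : ∀ x n, act x n = x → n = 0) :
    DAD act ≤ ((3 ^ d - 1 : ℕ) : ℕ∞) := by
  obtain ⟨e⟩ := hCantor
  have : CompactSpace X := e.symm.compactSpace
  have : TotallySeparatedSpace X := e.totallySeparatedSpace
  exact sInf_le ⟨_, rfl, DADle.three_pow_sub_one ⟨hact0, hactadd⟩ hactc hfree⟩
end

section
/- Let X be a topological space with a ℤ^d-action, let U ⊆ X be clopen, L ∈ ℕ, and let C ⊆ X → 2^{ℤ^d} be continuous and equivariant. Then the map x ↦ C'(x) := C(x) ∪ {n ∈ ℤ^d : x·n ∈ U and (n + □_L) ∩ (C(x) + □_L) = ∅} is continuous and equivariant. -/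
/-!
Whether `n` lies in `C' x` depends only on whether `x·n ∈ U` and on `C x` inside the box
`n + □_{2L}`. For `n` in the ball of radius `R` the first is a finite family of clopen
conditions on `x`, and the second only involves `C x` on the ball of radius `R + 2L√d`, which
is locally constant by continuity of `C`; hence `C'` is continuous. Equivariance holds because
translating everything by `m` preserves the box condition.
-/

open Filter Topology

section IntBall

variable {d : ℕ}

variable (d) in
def intBall (R : ℝ) : Set (Fin d → ℤ) := {n | Real.sqrt (∑ i, ((n i : ℝ)) ^ 2) ≤ R}

lemma intBall_subset_intBall {R R' : ℝ} (h : R ≤ R') : intBall d R ⊆ intBall d R' :=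
  fun _ hn => le_trans hn h

def castEuclidean (v : Fin d → ℤ) : EuclideanSpace ℝ (Fin d) := WithLp.toLp 2 fun i => (v i : ℝ)

lemma mem_intBall_iff {R : ℝ} {n : Fin d → ℤ} : n ∈ intBall d R ↔ ‖castEuclidean n‖ ≤ R := by
  simp [intBall, castEuclidean, EuclideanSpace.norm_eq]

lemma castEuclidean_sub (a n : Fin d → ℤ) :
    castEuclidean (a - n) = castEuclidean a - castEuclidean n := by
  ext i; simp [castEuclidean]

lemma norm_castEuclidean_le_of_abs_le {v : Fin d → ℤ} {K : ℕ} (h : ∀ i, |(v i : ℝ)| ≤ K) :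
    ‖castEuclidean v‖ ≤ K * √d := by
  calc ‖castEuclidean v‖ = √(∑ i, |(v i : ℝ)| ^ 2) := by
        simp [castEuclidean, EuclideanSpace.norm_eq]
    _ ≤ √(∑ _i : Fin d, K ^ 2) := by gcongr with i; exact h i
    _ = K * √d := by simp [mul_comm]

lemma abs_le_of_mem_intBall {R : ℝ} {n : Fin d → ℤ} (hn : n ∈ intBall d R) (i : Fin d) :
    |(n i : ℝ)| ≤ R :=
  (PiLp.norm_apply_le (castEuclidean n) i).trans (mem_intBall_iff.mp hn)

lemma intBall_finite (R : ℝ) : (intBall d R).Finite := by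
  refine (Set.finite_Icc (fun _ => -⌈R⌉) (fun _ => ⌈R⌉)).subset fun n hn => ?_
  have h i := abs_le.mp ((abs_le_of_mem_intBall hn i).trans (Int.le_ceil R))
  exact ⟨fun i => by exact_mod_cast (h i).1, fun i => by exact_mod_cast (h i).2⟩

lemma mem_intBall_of_abs_sub_le {R : ℝ} {K : ℕ} {n a : Fin d → ℤ} (hn : n ∈ intBall d R)
    (h : ∀ i, |a i - n i| ≤ (K : ℤ)) : a ∈ intBall d (R + K * √d) := by
  rw [mem_intBall_iff] at hn ⊢
  have hsub : ‖castEuclidean (a - n)‖ ≤ K * √d :=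
    norm_castEuclidean_le_of_abs_le fun i => by exact_mod_cast h i
  rw [castEuclidean_sub] at hsub
  linarith [norm_le_norm_add_norm_sub' (castEuclidean a) (castEuclidean n)]

end IntBall

section BoxExtend

variable {d : ℕ}

/-- `(n + □_L) ∩ (A + □_L) = ∅`, written coordinatewise. -/
def BoxClear (L : ℕ) (A : Set (Fin d → ℤ)) (n : Fin d → ℤ) : Prop :=
  ∀ s : Fin d → ℤ, (∀ i, |s i - n i| ≤ (L : ℤ)) → ¬ ∃ a ∈ A, ∀ i, |s i - a i| ≤ (L : ℤ)

def boxExtend (L : ℕ) (A P : Set (Fin d → ℤ)) : Set (Fin d → ℤ) :=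
  A ∪ {n | n ∈ P ∧ BoxClear L A n}

lemma boxClear_congr {L : ℕ} {A B : Set (Fin d → ℤ)} {n : Fin d → ℤ}
    (h : ∀ a, (∀ i, |a i - n i| ≤ 2 * (L : ℤ)) → (a ∈ A ↔ a ∈ B)) :
    BoxClear L A n ↔ BoxClear L B n := by
  refine forall_congr' fun s => imp_congr_right fun hs => not_congr <| exists_congr fun a =>
    and_congr_left fun ha => h a fun i => ?_
  have := abs_sub_le (a i) (s i) (n i)
  rw [abs_sub_comm (a i) (s i)] at this
  linarith [hs i, ha i]

lemma boxClear_preimage_add {L : ℕ} {A : Set (Fin d → ℤ)} {b m : Fin d → ℤ} :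
    BoxClear L ((· + m) ⁻¹' A) b ↔ BoxClear L A (b + m) := by
  unfold BoxClear
  rw [← (Equiv.subRight m).forall_congr_right]
  refine forall_congr' fun s => imp_congr (by simp [sub_sub, add_comm]) (not_congr ?_)
  rw [← (Equiv.subRight m).exists_congr_right]
  simp

lemma boxExtend_preimage_add (L : ℕ) (A P : Set (Fin d → ℤ)) (m : Fin d → ℤ) :
    boxExtend L ((· + m) ⁻¹' A) ((· + m) ⁻¹' P) = (· + m) ⁻¹' boxExtend L A P := by
  ext b
  simp only [boxExtend, Set.mem_union, Set.mem_ofPred_eq, Set.mem_preimage, boxClear_preimage_add]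

lemma boxExtend_inter_intBall_eq {L : ℕ} {R : ℝ} {A B P Q : Set (Fin d → ℤ)}
    (hAB : A ∩ intBall d (R + (2 * L : ℕ) * √d) = B ∩ intBall d (R + (2 * L : ℕ) * √d))
    (hPQ : P ∩ intBall d R = Q ∩ intBall d R) :
    boxExtend L A P ∩ intBall d R = boxExtend L B Q ∩ intBall d R := by
  have hA {a} (ha : a ∈ intBall d (R + (2 * L : ℕ) * √d)) : a ∈ A ↔ a ∈ B :=
    ⟨fun h => ((Set.ext_iff.mp hAB a).mp ⟨h, ha⟩).1,
      fun h => ((Set.ext_iff.mp hAB a).mpr ⟨h, ha⟩).1⟩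
  ext n
  simp only [boxExtend, Set.mem_inter_iff, Set.mem_union, Set.mem_ofPred_eq]
  refine and_congr_left fun hn =>
    or_congr (hA ?_) (and_congr ?_ (boxClear_congr fun a ha => hA ?_))
  · exact intBall_subset_intBall (le_add_of_nonneg_right (by positivity)) hn
  · simpa [hn] using Set.ext_iff.mp hPQ n
  · exact mem_intBall_of_abs_sub_le hn (by exact_mod_cast ha)

end BoxExtend

lemma eventually_mem_iff_of_isClopen {X Y : Type*} [TopologicalSpace X] [TopologicalSpace Y]
    {f : X → Y} {x : X} {U : Set Y} (hU : IsClopen U) (hf : ContinuousAt f x) :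
    ∀ᶠ y in 𝓝 x, (f y ∈ U ↔ f x ∈ U) := by
  by_cases hx : f x ∈ U
  · filter_upwards [hf.preimage_mem_nhds (hU.isOpen.mem_nhds hx)] with y hy
    exact iff_of_true hy hx
  · filter_upwards [hf.preimage_mem_nhds (hU.compl.isOpen.mem_nhds hx)] with y hy
    exact iff_of_false hy hx

section BallContinuous

variable {d : ℕ} {X : Type*} [TopologicalSpace X]

/-- Continuity of `x ↦ A x` for the product (Cantor) topology on `Set (Fin d → ℤ)`. -/
def BallContinuous (A : X → Set (Fin d → ℤ)) : Prop :=
  ∀ x : X, ∀ R : ℝ, 0 < R → ∃ W : Set X, IsOpen W ∧ x ∈ W ∧ ∀ y ∈ W,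
    A y ∩ intBall d R = A x ∩ intBall d R

lemma ballContinuous_iff {A : X → Set (Fin d → ℤ)} :
    BallContinuous A ↔ ∀ x R, 0 < R → ∀ᶠ y in 𝓝 x, A y ∩ intBall d R = A x ∩ intBall d R := by
  simp only [BallContinuous, eventually_nhds_iff]
  exact forall₂_congr fun x R => imp_congr_right fun _ => exists_congr fun W => by tauto

lemma BallContinuous.boxExtend {A : X → Set (Fin d → ℤ)} (hA : BallContinuous A)
    (act : X → (Fin d → ℤ) → X) (hact : ∀ n, Continuous fun x => act x n)
    {U : Set X} (hU : IsClopen U) (L : ℕ) :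
    BallContinuous fun x => boxExtend L (A x) {n | act x n ∈ U} := by
  rw [ballContinuous_iff] at hA ⊢
  intro x R hR
  have hUnear : ∀ᶠ y in 𝓝 x, ∀ n ∈ intBall d R, (act y n ∈ U ↔ act x n ∈ U) :=
    (eventually_all_finite (intBall_finite R)).mpr fun n _ =>
      eventually_mem_iff_of_isClopen hU (hact n).continuousAt
  filter_upwards [hA x _ (by positivity : 0 < R + (2 * L : ℕ) * √d), hUnear] with y hAy hUy
  refine boxExtend_inter_intBall_eq hAy ?_
  ext n
  simp only [Set.mem_inter_iff, Set.mem_ofPred_eq]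
  exact and_congr_left (hUy n)

end BallContinuous

theorem stmt_19_general (d L : ℕ) (X : Type*) [TopologicalSpace X]
    (act : X → (Fin d → ℤ) → X)
    (hactadd : ∀ x m n, act (act x m) n = act x (m + n))
    (hactc : ∀ n, Continuous fun x => act x n)
    (U : Set X) (hU : IsClopen U)
    (C : X → Set (Fin d → ℤ))
    (hCcont : ∀ x : X, ∀ R : ℝ, 0 < R → ∃ W : Set X, IsOpen W ∧ x ∈ W ∧ ∀ y ∈ W,
      C y ∩ {n | Real.sqrt (∑ i, ((n i : ℝ)) ^ 2) ≤ R} =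
      C x ∩ {n | Real.sqrt (∑ i, ((n i : ℝ)) ^ 2) ≤ R})
    (hCequiv : ∀ x m, C (act x m) = {a | a + m ∈ C x}) :
    -- with C' x := C x ∪ {n | x·n ∈ U ∧ (n + □_L) ∩ (C x + □_L) = ∅}:
    (∀ x : X, ∀ R : ℝ, 0 < R → ∃ W : Set X, IsOpen W ∧ x ∈ W ∧ ∀ y ∈ W,
      (C y ∪ {n | act y n ∈ U ∧ ∀ s : Fin d → ℤ, (∀ i, |s i - n i| ≤ (L : ℤ)) →
          ¬ ∃ a ∈ C y, ∀ i, |s i - a i| ≤ (L : ℤ)}) ∩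
        {n | Real.sqrt (∑ i, ((n i : ℝ)) ^ 2) ≤ R} =
      (C x ∪ {n | act x n ∈ U ∧ ∀ s : Fin d → ℤ, (∀ i, |s i - n i| ≤ (L : ℤ)) →
          ¬ ∃ a ∈ C x, ∀ i, |s i - a i| ≤ (L : ℤ)}) ∩
        {n | Real.sqrt (∑ i, ((n i : ℝ)) ^ 2) ≤ R}) ∧
    (∀ x m,
      (C (act x m) ∪ {n | act (act x m) n ∈ U ∧ ∀ s : Fin d → ℤ,
          (∀ i, |s i - n i| ≤ (L : ℤ)) → ¬ ∃ a ∈ C (act x m), ∀ i, |s i - a i| ≤ (L : ℤ)}) =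
      {b | b + m ∈ C x ∪ {n | act x n ∈ U ∧ ∀ s : Fin d → ℤ,
          (∀ i, |s i - n i| ≤ (L : ℤ)) → ¬ ∃ a ∈ C x, ∀ i, |s i - a i| ≤ (L : ℤ)}}) := by
  refine ⟨BallContinuous.boxExtend hCcont act hactc hU L, fun x m => ?_⟩
  have hhit : {n | act (act x m) n ∈ U} = (· + m) ⁻¹' {n | act x n ∈ U} := by
    ext n
    simp [hactadd, add_comm]
  change boxExtend L (C (act x m)) {n | act (act x m) n ∈ U} = (· + m) ⁻¹' boxExtend L (C x) _
  rw [hCequiv, hhit]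
  exact boxExtend_preimage_add L (C x) _ m

/-- for a clopen `U` and a continuous equivariant set-valued map
`x ↦ C x ⊆ ℤ^d`, the map
`x ↦ C x ∪ {n : x·n ∈ U ∧ (n + □_L) ∩ (C x + □_L) = ∅}` is continuous and equivariant. -/
theorem stmt_19 (d L : ℕ) (X : Type*) [TopologicalSpace X]
    (act : X → (Fin d → ℤ) → X)
    (hact0 : ∀ x, act x 0 = x)
    (hactadd : ∀ x m n, act (act x m) n = act x (m + n))
    (hactc : ∀ n, Continuous fun x => act x n)
    (U : Set X) (hU : IsClopen U)
    (C : X → Set (Fin d → ℤ))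
    (hCcont : ∀ x : X, ∀ R : ℝ, 0 < R → ∃ W : Set X, IsOpen W ∧ x ∈ W ∧ ∀ y ∈ W,
      C y ∩ {n | Real.sqrt (∑ i, ((n i : ℝ)) ^ 2) ≤ R} =
      C x ∩ {n | Real.sqrt (∑ i, ((n i : ℝ)) ^ 2) ≤ R})
    (hCequiv : ∀ x m, C (act x m) = {a | a + m ∈ C x}) :
    -- with C' x := C x ∪ {n | x·n ∈ U ∧ (n + □_L) ∩ (C x + □_L) = ∅}:
    (∀ x : X, ∀ R : ℝ, 0 < R → ∃ W : Set X, IsOpen W ∧ x ∈ W ∧ ∀ y ∈ W,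
      (C y ∪ {n | act y n ∈ U ∧ ∀ s : Fin d → ℤ, (∀ i, |s i - n i| ≤ (L : ℤ)) →
          ¬ ∃ a ∈ C y, ∀ i, |s i - a i| ≤ (L : ℤ)}) ∩
        {n | Real.sqrt (∑ i, ((n i : ℝ)) ^ 2) ≤ R} =
      (C x ∪ {n | act x n ∈ U ∧ ∀ s : Fin d → ℤ, (∀ i, |s i - n i| ≤ (L : ℤ)) →
          ¬ ∃ a ∈ C x, ∀ i, |s i - a i| ≤ (L : ℤ)}) ∩
        {n | Real.sqrt (∑ i, ((n i : ℝ)) ^ 2) ≤ R}) ∧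
    (∀ x m,
      (C (act x m) ∪ {n | act (act x m) n ∈ U ∧ ∀ s : Fin d → ℤ,
          (∀ i, |s i - n i| ≤ (L : ℤ)) → ¬ ∃ a ∈ C (act x m), ∀ i, |s i - a i| ≤ (L : ℤ)}) =
      {b | b + m ∈ C x ∪ {n | act x n ∈ U ∧ ∀ s : Fin d → ℤ,
          (∀ i, |s i - n i| ≤ (L : ℤ)) → ¬ ∃ a ∈ C x, ∀ i, |s i - a i| ≤ (L : ℤ)}}) :=
  stmt_19_general d L X act hactadd hactc U hU C hCcont hCequiv
end
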